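/- If the nonzero eigenvalues λ₁,…,λₙ are pairwise distinct, then the vanishing of (L_{X_h}ω_R)(Xᵢ,Xⱼ) for all 0 ≤ i < j ≤ n (with X₀ = ∂/∂t) is equivalent to the Forbat conditions: for all i ≠ j, K_{Pᵢ}(K_{QⁱQʲ}K_{Pⱼ} − K_{QⁱPⱼ}K_{Qʲ}) = K_{Qⁱ}(K_{PᵢQʲ}K_{Pⱼ} − K_{PᵢPⱼ}K_{Qʲ}), and for all i, K_{Pᵢ}K_{Qⁱt} = K_{Qⁱ}K_{Pᵢt} (no summations). -/

import Mathlib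

noncomputable section

/-- The phase space `(J¹τ)* ≅ ℝ^{2n+1}` with coordinates `(t, Q, P)`. -/
abbrev Pha (n : ℕ) : Type := ℝ × (Fin n → ℝ) × (Fin n → ℝ)

variable {n : ℕ}

/-- The coordinate vector `∂/∂t`. -/
def eT : Pha n := (1, 0, 0)

/-- The coordinate vector `∂/∂Qⁱ`. -/
def eQ (i : Fin n) : Pha n := (0, Pi.single i 1, 0)

/-- The coordinate vector `∂/∂Pᵢ`. -/
def eP (i : Fin n) : Pha n := (0, 0, Pi.single i 1)

/-- First partial derivative of `f` at `x` in direction `v`. -/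
def pd (f : Pha n → ℝ) (x v : Pha n) : ℝ := fderiv ℝ f x v

/-- Second partial derivative `∂_u ∂_v f` at `x`. -/
def pd2 (f : Pha n → ℝ) (x u v : Pha n) : ℝ :=
  fderiv ℝ (fun y => fderiv ℝ f y v) x u

/-- The 2-form `ω_R = Σₗ λₗ(Qˡ) dPₗ∧dQˡ`, evaluated at `x` on tangent vectors
`v, w`. -/
def omegaR (lam : Fin n → ℝ → ℝ) (x v w : Pha n) : ℝ :=
  ∑ l, lam l (x.2.1 l) * (v.2.2 l * w.2.1 l - w.2.2 l * v.2.1 l)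

/-- The Hamiltonian vector field
`X_h = ∂/∂t + Σᵢ K_{Pᵢ} ∂/∂Qⁱ - Σᵢ K_{Qⁱ} ∂/∂Pᵢ`. -/
def Xh (K : Pha n → ℝ) (x : Pha n) : Pha n :=
  (1, fun i => pd K x (eP i), fun i => -pd K x (eQ i))

/-- Lie derivative of a (pointwise bilinear) 2-form `ω` along a vector field
`X`, evaluated at `x` on constant tangent vectors `v, w`:
`(L_X ω)(v,w) = X(ω(v,w)) + ω(∇_v X, w) + ω(v, ∇_w X)`. -/
def lieDer (X : Pha n → Pha n) (ω : Pha n → Pha n → Pha n → ℝ)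
    (x v w : Pha n) : ℝ :=
  fderiv ℝ (fun y => ω y v w) x (X x)
    + ω x (fderiv ℝ X x v) w + ω x v (fderiv ℝ X x w)

/-- The eigenvector field `Xᵢ = K_{Pᵢ} ∂/∂Qⁱ - K_{Qⁱ} ∂/∂Pᵢ` (no sum). -/
def Xev (K : Pha n → ℝ) (i : Fin n) (x : Pha n) : Pha n :=
  (0, Pi.single i (pd K x (eP i)), Pi.single i (-pd K x (eQ i)))

/-- The full eigenvector basis `X₀ = ∂/∂t`, `Xᵢ` for `i = 1, …, n`. -/
def XO (K : Pha n → ℝ) : Option (Fin n) → Pha n → Pha n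
  | none => fun _ => eT
  | some i => Xev K i

/-! ### Auxiliary lemmas -/

/-- The continuous linear projection onto the `Qˡ` coordinate. -/
def proj2 (l : Fin n) : Pha n →L[ℝ] ℝ :=
  (ContinuousLinearMap.proj l).comp
    ((ContinuousLinearMap.fst ℝ (Fin n → ℝ) (Fin n → ℝ)).comp
      (ContinuousLinearMap.snd ℝ ℝ ((Fin n → ℝ) × (Fin n → ℝ))))

lemma smooth_pd {K : Pha n → ℝ} (hK : ContDiff ℝ (⊤ : ℕ∞) K) (u : Pha n) :
    ContDiff ℝ (⊤ : ℕ∞) (fun y => fderiv ℝ K y u) :=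
  (hK.fderiv_right (by simp)).clm_apply contDiff_const

lemma pd2_symm {K : Pha n → ℝ} (hK : ContDiff ℝ (⊤ : ℕ∞) K) (x u v : Pha n) :
    pd2 K x u v = pd2 K x v u := by
  have hd : DifferentiableAt ℝ (fderiv ℝ K) x :=
    ((hK.fderiv_right (m := 1) (WithTop.coe_le_coe.2 le_top)).differentiable (by simp)) x
  have e : ∀ (w u' : Pha n),
      fderiv ℝ (fun y => fderiv ℝ K y w) x u' = fderiv ℝ (fderiv ℝ K) x u' w := by
    intro w u'
    rw [fderiv_clm_apply hd (differentiableAt_const w)]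
    simp
  rw [pd2, pd2, e, e]
  exact (hK.contDiffAt.isSymmSndFDerivAt (by rw [minSmoothness_of_isRCLikeNormedField]; exact WithTop.coe_le_coe.2 le_top)).eq u v

lemma fderiv_omega (lam : Fin n → ℝ → ℝ) (hlam : ∀ l, ContDiff ℝ (⊤ : ℕ∞) (lam l))
    (v w x u : Pha n) :
    fderiv ℝ (fun y => omegaR lam y v w) x u
      = ∑ l, deriv (lam l) (x.2.1 l) * u.2.1 l
          * (v.2.2 l * w.2.1 l - w.2.2 l * v.2.1 l) := by
  have h : HasFDerivAt (fun y => omegaR lam y v w)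
      (∑ l, (v.2.2 l * w.2.1 l - w.2.2 l * v.2.1 l)
          • (deriv (lam l) (x.2.1 l) • proj2 l)) x := by
    unfold omegaR
    apply HasFDerivAt.fun_sum
    intro l _
    exact ((((hlam l).differentiable (by simp)) (x.2.1 l)).hasDerivAt.comp_hasFDerivAt
      x ((proj2 l).hasFDerivAt)).mul_const _
  rw [h.fderiv, ContinuousLinearMap.sum_apply]
  refine Finset.sum_congr rfl fun l _ => ?_
  show (v.2.2 l * w.2.1 l - w.2.2 l * v.2.1 l) * (deriv (lam l) (x.2.1 l) * u.2.1 l) = _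
  ring

lemma fderiv_Xh {K : Pha n → ℝ} (hK : ContDiff ℝ (⊤ : ℕ∞) K) (x v : Pha n) :
    fderiv ℝ (Xh K) x v
      = (0, fun i => pd2 K x v (eP i), fun i => -pd2 K x v (eQ i)) := by
  have h : HasFDerivAt (Xh K)
      ((0 : Pha n →L[ℝ] ℝ).prod
        ((ContinuousLinearMap.pi fun i =>
            fderiv ℝ (fun y => fderiv ℝ K y (eP i)) x).prod
          (ContinuousLinearMap.pi fun i =>
            -(fderiv ℝ (fun y => fderiv ℝ K y (eQ i)) x)))) x := by
    unfold Xh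
    exact HasFDerivAt.prodMk (hasFDerivAt_const (1 : ℝ) x)
      (HasFDerivAt.prodMk (hasFDerivAt_pi.2 fun i =>
          (((smooth_pd hK (eP i)).differentiable (by simp)) x).hasFDerivAt)
        (hasFDerivAt_pi.2 fun i =>
          ((((smooth_pd hK (eQ i)).differentiable (by simp)) x).hasFDerivAt).neg))
  rw [h.fderiv]
  rfl

lemma fderiv_Xh_21 {K : Pha n → ℝ} (hK : ContDiff ℝ (⊤ : ℕ∞) K) (x v : Pha n) (l : Fin n) :
    (fderiv ℝ (Xh K) x v).2.1 l = pd2 K x v (eP l) := by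
  rw [fderiv_Xh hK]

lemma fderiv_Xh_22 {K : Pha n → ℝ} (hK : ContDiff ℝ (⊤ : ℕ∞) K) (x v : Pha n) (l : Fin n) :
    (fderiv ℝ (Xh K) x v).2.2 l = -pd2 K x v (eQ l) := by
  rw [fderiv_Xh hK]

lemma Xh_21 (K : Pha n → ℝ) (x : Pha n) (l : Fin n) :
    (Xh K x).2.1 l = pd K x (eP l) := rfl

lemma eT_21 (l : Fin n) : (eT (n := n)).2.1 l = 0 := rfl
lemma eT_22 (l : Fin n) : (eT (n := n)).2.2 l = 0 := rfl

lemma Xev_21 (K : Pha n → ℝ) (i : Fin n) (x : Pha n) (l : Fin n) :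
    (Xev K i x).2.1 l = (Pi.single i (pd K x (eP i)) : Fin n → ℝ) l := rfl
lemma Xev_22 (K : Pha n → ℝ) (i : Fin n) (x : Pha n) (l : Fin n) :
    (Xev K i x).2.2 l = (Pi.single i (-pd K x (eQ i)) : Fin n → ℝ) l := rfl

/-- Master formula for the Lie derivative evaluated on constant vectors. -/
lemma lieDer_master (lam : Fin n → ℝ → ℝ) (hlam : ∀ l, ContDiff ℝ (⊤ : ℕ∞) (lam l))
    {K : Pha n → ℝ} (hK : ContDiff ℝ (⊤ : ℕ∞) K) (x v w : Pha n) :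
    lieDer (Xh K) (omegaR lam) x v w
      = ∑ l, (deriv (lam l) (x.2.1 l) * pd K x (eP l)
            * (v.2.2 l * w.2.1 l - w.2.2 l * v.2.1 l)
          + lam l (x.2.1 l) * (-(pd2 K x v (eQ l)) * w.2.1 l
              - w.2.2 l * pd2 K x v (eP l)
              + v.2.2 l * pd2 K x w (eP l) + pd2 K x w (eQ l) * v.2.1 l)) := by
  unfold lieDer
  rw [fderiv_omega lam hlam v w x (Xh K x)]
  unfold omegaR
  simp only [fderiv_Xh_21 hK, fderiv_Xh_22 hK, Xh_21]
  rw [← Finset.sum_add_distrib, ← Finset.sum_add_distrib]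
  refine Finset.sum_congr rfl fun l _ => ?_
  ring

lemma lieDer_skew (lam : Fin n → ℝ → ℝ) (hlam : ∀ l, ContDiff ℝ (⊤ : ℕ∞) (lam l))
    {K : Pha n → ℝ} (hK : ContDiff ℝ (⊤ : ℕ∞) K) (x v w : Pha n) :
    lieDer (Xh K) (omegaR lam) x v w = -lieDer (Xh K) (omegaR lam) x w v := by
  rw [lieDer_master lam hlam hK, lieDer_master lam hlam hK, ← Finset.sum_neg_distrib]
  exact Finset.sum_congr rfl fun l _ => by ring

lemma pd2_Xev {K : Pha n → ℝ} (x u : Pha n) (i : Fin n) :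
    pd2 K x (Xev K i x) u
      = pd K x (eP i) * pd2 K x (eQ i) u - pd K x (eQ i) * pd2 K x (eP i) u := by
  have hvec : Xev K i x = pd K x (eP i) • eQ i - pd K x (eQ i) • eP i := by
    unfold Xev eQ eP
    refine Prod.ext (by simp) (Prod.ext ?_ ?_) <;>
      · funext k
        rcases eq_or_ne k i with rfl | hk
        · simp
        · simp [Pi.single_eq_of_ne hk]
  show (fderiv ℝ (fun y => fderiv ℝ K y u) x) (Xev K i x) = _
  rw [hvec, map_sub, map_smul, map_smul]
  rfl

/-- Value on `(∂/∂t, Xⱼ)`. -/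
lemma lieDer_val_T (lam : Fin n → ℝ → ℝ) (hlam : ∀ l, ContDiff ℝ (⊤ : ℕ∞) (lam l))
    {K : Pha n → ℝ} (hK : ContDiff ℝ (⊤ : ℕ∞) K) (x : Pha n) (j : Fin n) :
    lieDer (Xh K) (omegaR lam) x eT (Xev K j x)
      = lam j (x.2.1 j) * (pd K x (eQ j) * pd2 K x (eP j) eT
          - pd K x (eP j) * pd2 K x (eQ j) eT) := by
  rw [lieDer_master lam hlam hK]
  rw [Finset.sum_eq_single j]
  · simp only [eT_21, eT_22, Xev_21, Xev_22, Pi.single_eq_same]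
    rw [pd2_symm hK x eT (eQ j), pd2_symm hK x eT (eP j)]
    ring
  · intro b _ hb
    simp [eT_21, eT_22, Xev_21, Xev_22, Pi.single_eq_of_ne hb]
  · simp

/-- Value on `(Xᵢ, Xⱼ)` for `i ≠ j`. -/
lemma lieDer_val_IJ (lam : Fin n → ℝ → ℝ) (hlam : ∀ l, ContDiff ℝ (⊤ : ℕ∞) (lam l))
    {K : Pha n → ℝ} (hK : ContDiff ℝ (⊤ : ℕ∞) K) (x : Pha n) {i j : Fin n} (hij : i ≠ j) :
    lieDer (Xh K) (omegaR lam) x (Xev K i x) (Xev K j x)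
      = (lam i (x.2.1 i) - lam j (x.2.1 j))
        * (pd K x (eP i) * (pd2 K x (eQ i) (eQ j) * pd K x (eP j)
              - pd2 K x (eQ i) (eP j) * pd K x (eQ j))
          - pd K x (eQ i) * (pd2 K x (eP i) (eQ j) * pd K x (eP j)
              - pd2 K x (eP i) (eP j) * pd K x (eQ j))) := by
  rw [lieDer_master lam hlam hK]
  rw [← Finset.sum_subset (Finset.subset_univ ({i, j} : Finset (Fin n)))
    (by
      intro b _ hb
      simp only [Finset.mem_insert, Finset.mem_singleton, not_or] at hb
      simp [Xev_21, Xev_22, Pi.single_eq_of_ne hb.1, Pi.single_eq_of_ne hb.2])]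
  rw [Finset.sum_pair hij]
  simp only [Xev_21, Xev_22, Pi.single_eq_same,
    Pi.single_eq_of_ne hij, Pi.single_eq_of_ne (Ne.symm hij)]
  rw [pd2_Xev x (eQ i) j, pd2_Xev x (eP i) j, pd2_Xev x (eQ j) i, pd2_Xev x (eP j) i]
  rw [pd2_symm hK x (eQ j) (eQ i), pd2_symm hK x (eP j) (eQ i),
    pd2_symm hK x (eQ j) (eP i), pd2_symm hK x (eP j) (eP i)]
  ring

/-- If the eigenvalues `λₗ(Qˡ)` are everywhere nonzero and pairwise distinct,
then the vanishing of `L_{X_h} ω_R` on the distribution spanned by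
`X₀, X₁, …, Xₙ` is equivalent to Forbat's separability conditions. -/
theorem lieDer_vanishes_iff_forbat (lam : Fin n → ℝ → ℝ)
    (hlam : ∀ l, ContDiff ℝ (⊤ : ℕ∞) (lam l))
    (hne : ∀ (x : Pha n) i, lam i (x.2.1 i) ≠ 0)
    (hdist : ∀ (x : Pha n) i j, i ≠ j → lam i (x.2.1 i) ≠ lam j (x.2.1 j))
    (K : Pha n → ℝ) (hK : ContDiff ℝ (⊤ : ℕ∞) K) :
    (∀ (x : Pha n) (i j : Option (Fin n)), i ≠ j →
        lieDer (Xh K) (omegaR lam) x (XO K i x) (XO K j x) = 0)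
      ↔ ((∀ (x : Pha n) (i j : Fin n), i ≠ j →
            pd K x (eP i) * (pd2 K x (eQ i) (eQ j) * pd K x (eP j)
                - pd2 K x (eQ i) (eP j) * pd K x (eQ j))
              = pd K x (eQ i) * (pd2 K x (eP i) (eQ j) * pd K x (eP j)
                - pd2 K x (eP i) (eP j) * pd K x (eQ j)))
          ∧ (∀ (x : Pha n) (i : Fin n),
              pd K x (eP i) * pd2 K x (eQ i) eT
                = pd K x (eQ i) * pd2 K x (eP i) eT)) := by
  constructor
  · intro H
    constructor
    · intro x i j hij
      have h := H x (some i) (some j) (by simpa using hij)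
      rw [show XO K (some i) x = Xev K i x from rfl,
        show XO K (some j) x = Xev K j x from rfl,
        lieDer_val_IJ lam hlam hK x hij] at h
      have hd := hdist x i j hij
      have := mul_eq_zero.1 h
      rcases this with h' | h'
      · exact absurd (sub_eq_zero.1 h') hd
      · linarith [sub_eq_zero.1 h']
    · intro x i
      have h := H x none (some i) (by simp)
      rw [show XO K none x = eT from rfl, show XO K (some i) x = Xev K i x from rfl,
        lieDer_val_T lam hlam hK x i] at h
      have := (mul_eq_zero.1 h).resolve_left (hne x i)
      linarith [sub_eq_zero.1 this]
  · rintro ⟨h1, h2⟩ x i j hij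
    match i, j with
    | none, none => exact absurd rfl hij
    | none, some j =>
      rw [show XO K none x = eT from rfl, show XO K (some j) x = Xev K j x from rfl,
        lieDer_val_T lam hlam hK x j]
      have := h2 x j
      rw [show pd K x (eQ j) * pd2 K x (eP j) eT - pd K x (eP j) * pd2 K x (eQ j) eT
          = -(pd K x (eP j) * pd2 K x (eQ j) eT - pd K x (eQ j) * pd2 K x (eP j) eT)
        from by ring, this]
      ring
    | some i, none =>
      rw [show XO K (some i) x = Xev K i x from rfl, show XO K none x = eT from rfl,
        lieDer_skew lam hlam hK, lieDer_val_T lam hlam hK x i]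
      have := h2 x i
      rw [show pd K x (eQ i) * pd2 K x (eP i) eT - pd K x (eP i) * pd2 K x (eQ i) eT
          = -(pd K x (eP i) * pd2 K x (eQ i) eT - pd K x (eQ i) * pd2 K x (eP i) eT)
        from by ring, this]
      ring
    | some i, some j =>
      have hij' : i ≠ j := fun h => hij (by rw [h])
      rw [show XO K (some i) x = Xev K i x from rfl,
        show XO K (some j) x = Xev K j x from rfl,
        lieDer_val_IJ lam hlam hK x hij']
      rw [sub_eq_zero.2 (h1 x i j hij')]
      ring
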